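/- Mandel's theorem for oriented matroids: if (E, L) is an oriented matroid with tope set T, then L = {X ∈ {-1,0,1}^E : ∀ T ∈ T, X ∘ T ∈ T}. -/

import Mathlib

/-!
Every covector is tope-stable because composition is associative and `X ∘ T` is maximal
whenever `T` is. Conversely, take a tope-stable `X` and a covector `Z ⪰ X` with as many zeros
as possible. If `Z ≠ X`, the reflection `W = X ∘ (-Z)` is tope-stable with the zero set of `Z`,
hence a covector by induction on the number of zeros. `Z` and `W` are separated exactly where
`X` vanishes and `Z` does not, so strong elimination at such an element yields a covector above
`X` with more zeros than `Z`, a contradiction.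
-/

variable {E : Type*}

/-- Composition of sign vectors: (X ∘ Y)_e = X_e if X_e ≠ 0, else Y_e. -/
def comp (X Y : E → SignType) : E → SignType := fun e => if X e = 0 then Y e else X e

/-- Sign-vector partial order: X ⪯ Y iff X_e ∈ {0, Y_e} for all e. -/
def sle (X Y : E → SignType) : Prop := ∀ e, X e = 0 ∨ X e = Y e

/-- Face symmetry condition (FS). -/
def FS (L : Set (E → SignType)) : Prop := ∀ X ∈ L, ∀ Y ∈ L, comp X (-Y) ∈ L

/-- Composition condition (C). -/
def Comp (L : Set (E → SignType)) : Prop := ∀ X ∈ L, ∀ Y ∈ L, comp X Y ∈ L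

/-- Symmetry condition (SymCond). -/
def SymCond (L : Set (E → SignType)) : Prop := ∀ X ∈ L, -X ∈ L

/-- Strong elimination condition (SE). -/
def SE (L : Set (E → SignType)) : Prop :=
  ∀ X ∈ L, ∀ Y ∈ L, ∀ e, X e = -Y e → X e ≠ 0 →
    ∃ Z ∈ L, Z e = 0 ∧ ∀ f, ¬(X f = -Y f ∧ X f ≠ 0) → Z f = comp X Y f

/-- A tope: a maximal element of L with respect to `sle`. -/
def IsTope (L : Set (E → SignType)) (T : E → SignType) : Prop :=
  T ∈ L ∧ ∀ Z ∈ L, sle T Z → Z = T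

open Finset

lemma comp_comp (X Y Z : E → SignType) : comp (comp X Y) Z = comp X (comp Y Z) := by
  funext e
  by_cases hX : X e = 0 <;> by_cases hY : Y e = 0 <;> simp [comp, hX, hY]

lemma sle_comp (X Y : E → SignType) : sle X (comp X Y) := by
  intro e
  by_cases hX : X e = 0
  · exact Or.inl hX
  · exact Or.inr (by simp [comp, hX])

section ZeroSet

variable [Fintype E]

def zeroSet (X : E → SignType) : Finset E := univ.filter (X · = 0)

@[simp]
lemma mem_zeroSet {X : E → SignType} {e : E} : e ∈ zeroSet X ↔ X e = 0 := by
  simp [zeroSet]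

lemma zeroSet_subset_of_sle {X Z : E → SignType} (h : sle X Z) : zeroSet Z ⊆ zeroSet X := by
  intro e he
  rw [mem_zeroSet] at he ⊢
  rcases h e with hX | hX
  · exact hX
  · rw [hX, he]

lemma eq_of_sle_of_zeroSet_eq {X Z : E → SignType} (h : sle X Z)
    (hzero : zeroSet Z = zeroSet X) : Z = X := by
  funext e
  rcases h e with hX | hX
  · have hZ : Z e = 0 := mem_zeroSet.1 (hzero ▸ mem_zeroSet.2 hX)
    rw [hZ, hX]
  · exact hX.symm

lemma zeroSet_comp_neg_of_sle {X Z : E → SignType} (h : sle X Z) :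
    zeroSet (comp X (-Z)) = zeroSet Z := by
  ext e
  rcases h e with hX | hX
  · simp [comp, hX]
  · by_cases hX0 : X e = 0
    · simp [comp, hX0]
    · simp [comp, hX0, ← hX]

end ZeroSet

def TopeStable (L : Set (E → SignType)) (X : E → SignType) : Prop :=
  ∀ T, IsTope L T → IsTope L (comp X T)

variable {L : Set (E → SignType)}

lemma IsTope.comp_of_mem (hC : Comp L) {X T : E → SignType} (hX : X ∈ L) (hT : IsTope L T) :
    IsTope L (comp X T) := by
  refine ⟨hC X hX T hT.1, fun Z hZ hXTZ => funext fun e => ?_⟩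
  have hTZ : comp T Z = T := hT.2 _ (hC T hT.1 Z hZ) (sle_comp T Z)
  rcases hXTZ e with h | h
  · have hX0 : X e = 0 := by
      by_contra hX0
      simp [comp, hX0] at h
    have hT0 : T e = 0 := by simpa [comp, hX0] using h
    have hZT := congrFun hTZ e
    simp only [comp, hT0, if_true] at hZT
    rw [hZT, h]
  · exact h.symm

lemma TopeStable.comp_of_mem (hC : Comp L) {X Y : E → SignType} (hX : TopeStable L X)
    (hY : Y ∈ L) : TopeStable L (comp X Y) := fun T hT => by
  rw [comp_comp]
  exact hX _ (hT.comp_of_mem hC hY)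

lemma exists_isTope [Fintype E] (hne : L.Nonempty) : ∃ T, IsTope L T := by
  obtain ⟨T, hT, hmin⟩ := Set.exists_min_image L (fun Y => #(zeroSet Y)) (Set.toFinite L) hne
  refine ⟨T, hT, fun Z hZ hTZ => eq_of_sle_of_zeroSet_eq hTZ ?_⟩
  exact eq_of_subset_of_card_le (zeroSet_subset_of_sle hTZ) (hmin Z hZ)

/-- The separation set of `Z` and `X ∘ (-Z)` is `{e | X e = 0 ∧ Z e ≠ 0}`, so eliminating
there keeps the nonzero entries of `X` and the zeros of `Z`. -/
lemma SE.exists_sle_zeroSet_ssuperset [Fintype E] (hSE : SE L) {X Z : E → SignType}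
    (hZ : Z ∈ L) (hXZ : sle X Z) (hzero : zeroSet Z ⊂ zeroSet X) (hW : comp X (-Z) ∈ L) :
    ∃ Z' ∈ L, sle X Z' ∧ zeroSet Z ⊂ zeroSet Z' := by
  obtain ⟨g, hgX, hgZ⟩ := exists_of_ssubset hzero
  rw [mem_zeroSet] at hgX hgZ
  obtain ⟨Z', hZ', hZ'g, hZ'_eq⟩ := hSE Z hZ _ hW g (by simp [comp, hgX]) hgZ
  have hZ'_of_X_ne {e : E} (hXe : X e ≠ 0) : Z' e = X e := by
    have hZe : Z e = X e := ((hXZ e).resolve_left hXe).symm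
    rw [hZ'_eq e fun ⟨h, _⟩ => by simp [comp, hXe, hZe] at h]
    simp [comp, hZe, hXe]
  have hZ'_of_Z_eq {e : E} (hZe : Z e = 0) : Z' e = 0 := by
    rw [hZ'_eq e fun ⟨_, h⟩ => h hZe]
    have hXe : X e = 0 := (hXZ e).elim id (·.trans hZe)
    simp [comp, hZe, hXe]
  refine ⟨Z', hZ', fun e => ?_, ?_⟩
  · by_cases hXe : X e = 0
    · exact Or.inl hXe
    · exact Or.inr (hZ'_of_X_ne hXe).symm
  · refine (ssubset_iff_of_subset fun e he => ?_).2 ⟨g, mem_zeroSet.2 hZ'g, by simpa using hgZ⟩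
    exact mem_zeroSet.2 (hZ'_of_Z_eq (mem_zeroSet.1 he))

lemma mem_of_topeStable [Fintype E] (hne : L.Nonempty) (hC : Comp L) (hSym : SymCond L)
    (hSE : SE L) {X : E → SignType} (hX : TopeStable L X) : X ∈ L := by
  induction hn : #(zeroSet X) using Nat.strong_induction_on generalizing X with
  | _ n IH =>
  obtain ⟨T, hT⟩ := exists_isTope hne
  obtain ⟨Z, ⟨hZ, hXZ⟩, hmax⟩ := Set.exists_max_image {Z | Z ∈ L ∧ sle X Z}
    (fun Z => #(zeroSet Z)) (Set.toFinite _) ⟨comp X T, (hX T hT).1, sle_comp X T⟩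
  by_contra hXL
  have hzero : zeroSet Z ⊂ zeroSet X := (zeroSet_subset_of_sle hXZ).ssubset_of_ne
    fun h => hXL (eq_of_sle_of_zeroSet_eq hXZ h ▸ hZ)
  have hW : comp X (-Z) ∈ L := by
    refine IH _ ?_ (hX.comp_of_mem hC (hSym Z hZ)) rfl
    rw [zeroSet_comp_neg_of_sle hXZ, ← hn]
    exact card_lt_card hzero
  obtain ⟨Z', hZ', hXZ', hZZ'⟩ := hSE.exists_sle_zeroSet_ssuperset hZ hXZ hzero hW
  exact (hmax Z' ⟨hZ', hXZ'⟩).not_gt (card_lt_card hZZ')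

theorem mandel [Fintype E] (L : Set (E → SignType))
    (hne : L.Nonempty) (hC : Comp L) (hSym : SymCond L) (hSE : SE L) :
    L = {X : E → SignType | ∀ T, IsTope L T → IsTope L (comp X T)} := by
  ext X
  exact ⟨fun hX _ hT => hT.comp_of_mem hC hX, mem_of_topeStable hne hC hSym hSE⟩
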